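/- The invariant S_o, defined for nanophrases over an arbitrary alphabet α with involution τ, is invariant under the first homotopy move: if P₁ = (𝒜,(xAAy)) and P₂ = (𝒜∖{A},(xy)), then S_o(P₁) = S_o(P₂). -/

import Mathlib

/-!
The two occurrences of `A` in `xAAy` are adjacent, so `A` is interlaced with no letter:
`σ(A, ·)` and `σ(·, A)` vanish, hence `l_{P₁}(A) = 0` and `A` never contributes to
`(B_{P₁})_j(v)` for `v ≠ 0`. Deleting `AA` moves every later occurrence two places to the
left, which preserves the relative order of the remaining occurrences, their components and
projections; so every other letter has the same `σ`, hence the same `l`, in `P₁` and `P₂`.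
-/

/-- A phrase over alphabet `α`: a flattened list of entries where `none` is the
component separator `|` and `some (n, a)` is an occurrence of the letter with
name `n` and projection `a ∈ α`. -/
abbrev Phrase (α : Type) := List (Option (ℕ × α))

/-- `P` is a nanophrase: every occurring letter occurs exactly twice, and a
letter name determines its projection. -/
def isNanoP {α : Type} [DecidableEq α] (P : Phrase α) : Prop :=
  ∀ p ∈ P.reduceOption, P.reduceOption.count p = 2 ∧
    ∀ q ∈ P.reduceOption, q.1 = p.1 → q.2 = p.2

/-- The three `(Q,R,S)`-homotopy moves on phrases. -/
inductive PMove {α : Type} (Q : Set α) (R : Set (α × α)) (S : Set (α × α × α)) :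
    Phrase α → Phrase α → Prop
  | m1 (x y : Phrase α) (n : ℕ) (a : α) (h : a ∈ Q) :
      PMove Q R S (x ++ [some (n, a), some (n, a)] ++ y) (x ++ y)
  | m2 (x y z : Phrase α) (n m : ℕ) (a b : α) (h : (a, b) ∈ R) :
      PMove Q R S
        (x ++ [some (n, a), some (m, b)] ++ y ++ [some (m, b), some (n, a)] ++ z)
        (x ++ y ++ z)
  | m3 (x y z t : Phrase α) (n m p : ℕ) (a b c : α) (h : (a, b, c) ∈ S) :
      PMove Q R S
        (x ++ [some (n, a), some (m, b)] ++ y ++ [some (n, a), some (p, c)] ++ z ++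
          [some (m, b), some (p, c)] ++ t)
        (x ++ [some (m, b), some (n, a)] ++ y ++ [some (p, c), some (n, a)] ++ z ++
          [some (p, c), some (m, b)] ++ t)

/-- Isomorphism of phrases: an injective renaming of letter names preserving
projections and the phrase structure. -/
def PIso {α : Type} (P₁ P₂ : Phrase α) : Prop :=
  ∃ f : Equiv.Perm ℕ, P₂ = P₁.map (Option.map fun q => (f q.1, q.2))

/-- One step of `(Q,R,S)`-homotopy: an isomorphism, a move, or an inverse move. -/
def PStep {α : Type} (Q : Set α) (R : Set (α × α)) (S : Set (α × α × α))
    (P₁ P₂ : Phrase α) : Prop :=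
  PIso P₁ P₂ ∨ PMove Q R S P₁ P₂ ∨ PMove Q R S P₂ P₁

/-- `(Q,R,S)`-homotopy of phrases. -/
def PHomotopic {α : Type} (Q : Set α) (R : Set (α × α)) (S : Set (α × α × α)) :
    Phrase α → Phrase α → Prop :=
  Relation.ReflTransGen (PStep Q R S)

/-- The number of components (length) of a phrase. -/
def compCount {α : Type} (P : Phrase α) : ℕ := (P.filter fun o => o.isNone).length + 1

/-- The data of a complete representative system for the orbits of the
involution `τ`: orbits are indexed by `1,…,l+m`, the first `l` being free
(size 2) and the last `m` fixed points; `rep q` is the chosen representative of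
the `q`-th orbit and `orb a` is the index of the orbit of `a`. -/
def IsCRS {α : Type} (τ : α → α) (l m : ℕ) (rep : ℕ → α) (orb : α → ℕ) : Prop :=
  Function.Involutive τ ∧
  (∀ a : α, 1 ≤ orb a ∧ orb a ≤ l + m) ∧
  (∀ a : α, a = rep (orb a) ∨ a = τ (rep (orb a))) ∧
  (∀ q : ℕ, 1 ≤ q → q ≤ l + m → orb (rep q) = q) ∧
  (∀ q : ℕ, 1 ≤ q → q ≤ l + m → (q ≤ l ↔ τ (rep q) ≠ rep q)) ∧
  (∀ a : α, orb (τ a) = orb a)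

/-- The subgroup of `∏_{(p,q)} ℤ` by which one quotients to obtain the mixed
group `∏ K_{(p,q)}` with `K_{(p,q)} = ℤ` if `p,q ≤ l` and `ℤ/2ℤ` otherwise. -/
def Ksub (l : ℕ) : AddSubgroup ((ℕ × ℕ) → ℤ) where
  carrier := {f | ∀ pq : ℕ × ℕ,
    (pq.1 ≤ l ∧ pq.2 ≤ l → f pq = 0) ∧ (¬(pq.1 ≤ l ∧ pq.2 ≤ l) → (2 : ℤ) ∣ f pq)}
  zero_mem' := fun pq => ⟨fun _ => rfl, fun _ => dvd_zero 2⟩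
  add_mem' := by
    intro f g hf hg pq
    refine ⟨fun h => ?_, fun h => ?_⟩
    · show f pq + g pq = 0
      rw [(hf pq).1 h, (hg pq).1 h, add_zero]
    · exact dvd_add ((hf pq).2 h) ((hg pq).2 h)
  neg_mem' := by
    intro f hf pq
    refine ⟨fun h => ?_, fun h => ?_⟩
    · show -f pq = 0
      rw [(hf pq).1 h, neg_zero]
    · exact dvd_neg.mpr ((hf pq).2 h)

/-- The group `∏ K_{(p,q)}`, `K_{(p,q)} = ℤ` if `p,q ≤ l`, else `ℤ/2ℤ`. -/
def KG (l : ℕ) := ((ℕ × ℕ) → ℤ) ⧸ Ksub l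

instance (l : ℕ) : AddCommGroup (KG l) := QuotientAddGroup.Quotient.addCommGroup _

/-- The canonical projection onto `∏ K_{(p,q)}`. -/
def kmk (l : ℕ) : ((ℕ × ℕ) → ℤ) → KG l := QuotientAddGroup.mk

/-- The basis vector `e_{(p,q)}`. -/
def ehat (p q : ℕ) : (ℕ × ℕ) → ℤ := fun pq => if pq = (p, q) then 1 else 0

/-- The coordinate of `v ∈ ∏ K_{(p,q)}` at `pq` is zero (as an element of `ℤ`
if `pq` is a free-free pair, of `ℤ/2ℤ` otherwise). -/
def ZeroCoord (l : ℕ) (v : KG l) (pq : ℕ × ℕ) : Prop :=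
  ∀ f : (ℕ × ℕ) → ℤ, kmk l f = v →
    ((pq.1 ≤ l ∧ pq.2 ≤ l → f pq = 0) ∧ (¬(pq.1 ≤ l ∧ pq.2 ≤ l) → (2 : ℤ) ∣ f pq))

/-- `v` is of type (i): its coordinates `(r,s)` with `r > l` all vanish. -/
def TypeI (l : ℕ) (v : ℕ → KG l) : Prop :=
  ∀ (j r s : ℕ), l < r → ZeroCoord l (v j) (r, s)

/-- `v` is of type (ii): its coordinates `(r,s)` with `r ≤ l` all vanish. -/
def TypeII (l : ℕ) (v : ℕ → KG l) : Prop :=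
  ∀ (j r s : ℕ), r ≤ l → ZeroCoord l (v j) (r, s)

/-- `ε(a) = +1` if `a` is a chosen representative, `−1` otherwise. -/
def eps {α : Type} [DecidableEq α] (rep : ℕ → α) (orb : α → ℕ) (a : α) : ℤ :=
  if a = rep (orb a) then 1 else -1

/-- Flatten a phrase, recording for each occurrence its letter name, projection,
and the (1-based) index of the component in which it occurs. -/
def flat {α : Type} : Phrase α → ℕ → List (ℕ × α × ℕ)
  | [], _ => []
  | Option.none :: P, i => flat P (i + 1)
  | Option.some q :: P, i => (q.1, q.2, i) :: flat P i

/-- The positions (0-based, in the flattening of `P`) of the occurrences of the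
letter named `n`. -/
def posL {α : Type} (P : Phrase α) (n : ℕ) : List ℕ :=
  (((flat P 1).zipIdx.filter fun iq => iq.1.1 = n).map Prod.snd)

/-- Position of the first occurrence of the letter named `n`. -/
def pos1 {α : Type} (P : Phrase α) (n : ℕ) : ℕ := (posL P n).headI

/-- Position of the second occurrence of the letter named `n`. -/
def pos2 {α : Type} (P : Phrase α) (n : ℕ) : ℕ := (posL P n).getLast!

/-- The projection in `α` of the letter named `n`. -/
def projP {α : Type} [Inhabited α] (P : Phrase α) (n : ℕ) : α :=
  (((flat P 1).filter fun q => q.1 = n).headI).2.1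

/-- The component containing the first occurrence of the letter named `n`. -/
def comp1 {α : Type} [Inhabited α] (P : Phrase α) (n : ℕ) : ℕ :=
  ((((flat P 1).filter fun q => q.1 = n).map fun q => q.2.2)).headI

/-- The component containing the second occurrence of the letter named `n`. -/
def comp2 {α : Type} [Inhabited α] (P : Phrase α) (n : ℕ) : ℕ :=
  ((((flat P 1).filter fun q => q.1 = n).map fun q => q.2.2)).getLast!

/-- Fukunaga's `σ_P^j(A,B)` (a lift to `∏ ℤ`; its class in `∏ K_{(p,q)}` is the
actual value): `± e_{(p,q)}` according to the interlacement pattern of `A,B`,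
the component of the relevant occurrence of `B`, and whether `|B|` is a chosen
representative; `0` if `A` and `B` are not interlaced. -/
def sigmaHat {α : Type} [DecidableEq α] [Inhabited α] (rep : ℕ → α) (orb : α → ℕ)
    (P : Phrase α) (j : ℕ) (nA nB : ℕ) : (ℕ × ℕ) → ℤ :=
  if pos1 P nA < pos1 P nB ∧ pos1 P nB < pos2 P nA ∧ pos2 P nA < pos2 P nB ∧
      comp2 P nB = j then
    eps rep orb (projP P nB) • ehat (orb (projP P nA)) (orb (projP P nB))
  else if pos1 P nB < pos1 P nA ∧ pos1 P nA < pos2 P nB ∧ pos2 P nB < pos2 P nA ∧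
      comp1 P nB = j then
    (-eps rep orb (projP P nB)) • ehat (orb (projP P nA)) (orb (projP P nB))
  else 0

/-- The list of letter names occurring in `P`. -/
def lettersP {α : Type} (P : Phrase α) : List ℕ :=
  ((P.reduceOption.map Prod.fst)).dedup

/-- The list `𝒜_j` of letter names occurring in the `j`-th component of `P`. -/
def compLetters {α : Type} (P : Phrase α) (j : ℕ) : List ℕ :=
  ((((flat P 1).filter fun q => q.2.2 = j).map fun q => q.1)).dedup

/-- A lift of `l_{P,j}(A) = Σ_{X ∈ 𝒜} σ_P^j(A,X)`. -/
def lHat {α : Type} [DecidableEq α] [Inhabited α] (rep : ℕ → α) (orb : α → ℕ)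
    (P : Phrase α) (nA : ℕ) (j : ℕ) : (ℕ × ℕ) → ℤ :=
  ((lettersP P).map fun nX => sigmaHat rep orb P j nA nX).sum

/-- `l_P(A) ∈ (∏ K_{(p,q)})^k`, as a function of the component index `j`. -/
def lP {α : Type} [DecidableEq α] [Inhabited α] (l : ℕ) (rep : ℕ → α) (orb : α → ℕ)
    (P : Phrase α) (nA : ℕ) : ℕ → KG l :=
  fun j => kmk l (lHat rep orb P nA j)

open Classical in
/-- The type (i) (`ℤ`-valued) part of `(B_P)_j`:
`(B_P)_j(v) = Σ_{A ∈ 𝒜_j, l_P(A) = v} ε(A)` if `v` is of type (i), else `0`. -/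
noncomputable def B1 {α : Type} [DecidableEq α] [Inhabited α] (l : ℕ)
    (rep : ℕ → α) (orb : α → ℕ) (P : Phrase α) (j : ℕ) (v : ℕ → KG l) : ℤ :=
  if TypeI l v then
    (((compLetters P j).filter fun nA => lP l rep orb P nA = v).map fun nA =>
      eps rep orb (projP P nA)).sum
  else 0

open Classical in
/-- The type (ii) (`ℤ/2ℤ`-valued) part of `(B_P)_j`:
`(B_P)_j(v) = Σ_{A ∈ 𝒜_j, l_P(A) = v} ε(A) mod 2` if `v` is of type (ii), else `0`. -/
noncomputable def B2 {α : Type} [DecidableEq α] [Inhabited α] (l : ℕ)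
    (rep : ℕ → α) (orb : α → ℕ) (P : Phrase α) (j : ℕ) (v : ℕ → KG l) : ZMod 2 :=
  if TypeII l v then
    ((((compLetters P j).filter fun nA => lP l rep orb P nA = v).map fun nA =>
      eps rep orb (projP P nA)).sum : ZMod 2)
  else 0

/-- Equality of the invariants `S_o` of two nanophrases: the maps `(B_P)_j`
agree (on nonzero vectors, where they are defined). -/
def SoEq {α : Type} [DecidableEq α] [Inhabited α] (l : ℕ) (rep : ℕ → α)
    (orb : α → ℕ) (P₁ P₂ : Phrase α) : Prop :=
  ∀ (j : ℕ) (v : ℕ → KG l), v ≠ 0 →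
    B1 l rep orb P₁ j v = B1 l rep orb P₂ j v ∧
    B2 l rep orb P₁ j v = B2 l rep orb P₂ j v


namespace List

theorem headI_map_of_ne_nil {β γ : Type*} [Inhabited β] [Inhabited γ] (f : β → γ)
    {l : List β} (hl : l ≠ []) : (l.map f).headI = f l.headI := by
  cases l with
  | nil => exact absurd rfl hl
  | cons b l => rfl

theorem getLast!_map_of_ne_nil {β γ : Type*} [Inhabited β] [Inhabited γ] (f : β → γ)
    {l : List β} (hl : l ≠ []) : (l.map f).getLast! = f l.getLast! := by
  simp only [getLast!_eq_getLast?_getD, getLast?_map, getLast?_eq_some_getLast hl,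
    Option.map_some, Option.getD_some]

end List

/-- The position, in `F ++ t :: t :: G`, of the entry at position `u` of `F ++ G`,
where `p = F.length`. -/
def shiftPast (p u : ℕ) : ℕ := if u < p then u else u + 2

theorem shiftPast_lt_shiftPast {p u v : ℕ} : shiftPast p u < shiftPast p v ↔ u < v := by
  unfold shiftPast
  split_ifs <;> omega

theorem filter_zipIdx_append_pair {β : Type*} (q : β → Bool) (F G : List β) {t : β}
    (ht : q t = false) :
    (F ++ t :: t :: G).zipIdx.filter (fun iq => q iq.1) =
      ((F ++ G).zipIdx.filter (fun iq => q iq.1)).map (Prod.map id (shiftPast F.length)) := by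
  rw [List.zipIdx_append, List.zipIdx_append, List.zipIdx_cons, List.zipIdx_cons,
    List.filter_append, List.filter_append, List.filter_cons_of_neg (by simpa using ht),
    List.filter_cons_of_neg (by simpa using ht), List.map_append, zero_add,
    show F.length + 1 + 1 = 2 + F.length by omega, ← List.map_snd_add_zipIdx_eq_zipIdx,
    List.filter_map]
  congr 1
  · refine (List.map_congr_left fun iq hiq => ?_).trans (List.map_id _) |>.symm
    have := List.snd_lt_add_of_mem_zipIdx (List.mem_of_mem_filter hiq)
    rw [zero_add] at this
    simp [Prod.map, shiftPast, this]
  · refine List.map_congr_left fun iq hiq => ?_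
    have := List.le_snd_of_mem_zipIdx (List.mem_of_mem_filter hiq)
    simp [Prod.map, shiftPast, Nat.not_lt.mpr this]

section Flattening

variable {α : Type}

theorem flat_append (u v : Phrase α) (i : ℕ) :
    flat (u ++ v) i = flat u i ++ flat v (i + (u.filter fun o => o.isNone).length) := by
  induction u generalizing i with
  | nil => simp [flat]
  | cons o u ih =>
    cases o with
    | none => simp [flat, ih]; ring_nf
    | some q => simp [flat, ih]

theorem map_flat_eq_reduceOption (P : Phrase α) (i : ℕ) :
    (flat P i).map (fun s => (s.1, s.2.1)) = P.reduceOption := by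
  induction P generalizing i with
  | nil => simp [flat]
  | cons o P ih =>
    cases o with
    | none => simp [flat, ih]
    | some q => simp [flat, ih]

theorem mem_lettersP_iff {P : Phrase α} {b : ℕ} : b ∈ lettersP P ↔ ∃ s ∈ flat P 1, s.1 = b := by
  simp [lettersP, ← map_flat_eq_reduceOption P 1]

theorem mem_compLetters_iff {P : Phrase α} {j b : ℕ} :
    b ∈ compLetters P j ↔ ∃ s ∈ flat P 1, s.2.2 = j ∧ s.1 = b := by
  simp [compLetters]

theorem posL_ne_nil_of_mem_lettersP {P : Phrase α} {b : ℕ} (hb : b ∈ lettersP P) :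
    posL P b ≠ [] := by
  obtain ⟨s, hs, rfl⟩ := mem_lettersP_iff.mp hb
  rw [← List.zipIdx_map_fst 0 (flat P 1), List.mem_map] at hs
  obtain ⟨iq, hiq, rfl⟩ := hs
  simp only [posL, ne_eq, List.map_eq_nil_iff, List.filter_eq_nil_iff]
  exact fun h => by simpa using h iq hiq

end Flattening

section Invariant

variable {α : Type} [DecidableEq α] [Inhabited α] (rep : ℕ → α) (orb : α → ℕ)

theorem sigmaHat_eq_zero_left_of_adjacent {P : Phrase α} {A : ℕ}
    (hA : pos2 P A = pos1 P A + 1) (j B : ℕ) : sigmaHat rep orb P j A B = 0 := by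
  rw [sigmaHat, if_neg (by omega), if_neg (by omega)]

theorem sigmaHat_eq_zero_right_of_adjacent {P : Phrase α} {A : ℕ}
    (hA : pos2 P A = pos1 P A + 1) (j B : ℕ) : sigmaHat rep orb P j B A = 0 := by
  rw [sigmaHat, if_neg (by omega), if_neg (by omega)]

theorem lP_eq_zero_of_adjacent (l : ℕ) {P : Phrase α} {A : ℕ}
    (hA : pos2 P A = pos1 P A + 1) : lP l rep orb P A = 0 := by
  funext j
  simp only [lP, lHat, sigmaHat_eq_zero_left_of_adjacent rep orb hA, List.map_const',
    List.sum_replicate, smul_zero, Pi.zero_apply]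
  exact QuotientAddGroup.mk_zero _

open Classical in
theorem soEq_of_perm (l : ℕ) {P₁ P₂ : Phrase α}
    (h : ∀ j (v : ℕ → KG l), v ≠ 0 →
      (((compLetters P₁ j).filter fun A => lP l rep orb P₁ A = v).map
          fun A => eps rep orb (projP P₁ A)).Perm
        (((compLetters P₂ j).filter fun A => lP l rep orb P₂ A = v).map
          fun A => eps rep orb (projP P₂ A))) :
    SoEq l rep orb P₁ P₂ := by
  intro j v hv
  have hsum := (h j v hv).sum_eq
  refine ⟨?_, ?_⟩
  · simp only [B1, hsum]
  · simp only [B2, hsum]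

end Invariant

def DeletesAdjacentPair {α : Type} (P₁ P₂ : Phrase α) (t : ℕ × α × ℕ) : Prop :=
  ∃ F G, flat P₁ 1 = F ++ t :: t :: G ∧ flat P₂ 1 = F ++ G ∧ ∀ s ∈ F ++ G, s.1 ≠ t.1

namespace DeletesAdjacentPair

variable {α : Type} {P₁ P₂ : Phrase α} {t : ℕ × α × ℕ}

theorem ne_of_mem_lettersP (h : DeletesAdjacentPair P₁ P₂ t) {b : ℕ} (hb : b ∈ lettersP P₂) :
    b ≠ t.1 := by
  obtain ⟨F, G, -, h₂, hfresh⟩ := h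
  obtain ⟨s, hs, rfl⟩ := mem_lettersP_iff.mp hb
  exact hfresh s (h₂ ▸ hs)

theorem posL_eq_map_shiftPast (h : DeletesAdjacentPair P₁ P₂ t) :
    ∃ p, ∀ b ≠ t.1, posL P₁ b = (posL P₂ b).map (shiftPast p) := by
  obtain ⟨F, G, h₁, h₂, -⟩ := h
  refine ⟨F.length, fun b hb => ?_⟩
  rw [posL, posL, h₁, h₂,
    filter_zipIdx_append_pair (fun s : ℕ × α × ℕ => decide (s.1 = b)) _ _
      (by simpa using hb.symm),
    List.map_map, List.map_map]
  rfl

theorem filter_flat_eq (h : DeletesAdjacentPair P₁ P₂ t) {b : ℕ} (hb : b ≠ t.1) :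
    (flat P₁ 1).filter (fun s => s.1 = b) = (flat P₂ 1).filter (fun s => s.1 = b) := by
  obtain ⟨F, G, h₁, h₂, -⟩ := h
  rw [h₁, h₂, List.filter_append, List.filter_append, List.filter_cons_of_neg,
    List.filter_cons_of_neg] <;> simpa using hb.symm

theorem pos2_fst (h : DeletesAdjacentPair P₁ P₂ t) : pos2 P₁ t.1 = pos1 P₁ t.1 + 1 := by
  obtain ⟨F, G, h₁, -, hfresh⟩ := h
  have hnone : ∀ L : List (ℕ × α × ℕ), (∀ s ∈ L, s.1 ≠ t.1) →
      ∀ k, (L.zipIdx k).filter (fun iq => iq.1.1 = t.1) = [] := fun L hL k =>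
    List.filter_eq_nil_iff.mpr fun iq hiq => by
      simpa using hL iq.1 (List.fst_mem_of_mem_zipIdx hiq)
  have hpos : posL P₁ t.1 = [F.length, F.length + 1] := by
    rw [posL, h₁, List.zipIdx_append, List.zipIdx_cons, List.zipIdx_cons, List.filter_append,
      hnone F (fun s hs => hfresh s (List.mem_append_left _ hs))]
    simp [hnone G (fun s hs => hfresh s (List.mem_append_right _ hs))]
  simp [pos1, pos2, hpos]

theorem lettersP_perm (h : DeletesAdjacentPair P₁ P₂ t) :
    (lettersP P₁).Perm (t.1 :: lettersP P₂) := by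
  have hfresh : t.1 ∉ lettersP P₂ := fun ht => h.ne_of_mem_lettersP ht rfl
  obtain ⟨F, G, h₁, h₂, -⟩ := h
  refine (List.perm_ext_iff_of_nodup (l₁ := lettersP P₁) (List.nodup_dedup _)
    (List.nodup_cons.mpr ⟨hfresh, List.nodup_dedup _⟩)).mpr fun b => ?_
  rw [List.mem_cons, mem_lettersP_iff, mem_lettersP_iff, h₁, h₂]
  simp only [List.mem_append, List.mem_cons]
  aesop

theorem mem_compLetters_iff (h : DeletesAdjacentPair P₁ P₂ t) {j b : ℕ} :
    b ∈ compLetters P₁ j ↔ (b = t.1 ∧ t.2.2 = j) ∨ b ∈ compLetters P₂ j := by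
  obtain ⟨F, G, h₁, h₂, -⟩ := h
  simp only [_root_.mem_compLetters_iff, h₁, h₂, List.mem_append, List.mem_cons]
  aesop

section Invariant

variable [DecidableEq α] [Inhabited α] (rep : ℕ → α) (orb : α → ℕ)

theorem sigmaHat_eq (h : DeletesAdjacentPair P₁ P₂ t) (j : ℕ) {A B : ℕ}
    (hA : A ∈ lettersP P₂) (hB : B ∈ lettersP P₂) :
    sigmaHat rep orb P₁ j A B = sigmaHat rep orb P₂ j A B := by
  obtain ⟨p, hpos⟩ := h.posL_eq_map_shiftPast
  have hpos1 : ∀ b ∈ lettersP P₂, pos1 P₁ b = shiftPast p (pos1 P₂ b) := fun b hb => by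
    rw [pos1, pos1, hpos b (h.ne_of_mem_lettersP hb),
      List.headI_map_of_ne_nil _ (posL_ne_nil_of_mem_lettersP hb)]
  have hpos2 : ∀ b ∈ lettersP P₂, pos2 P₁ b = shiftPast p (pos2 P₂ b) := fun b hb => by
    rw [pos2, pos2, hpos b (h.ne_of_mem_lettersP hb),
      List.getLast!_map_of_ne_nil _ (posL_ne_nil_of_mem_lettersP hb)]
  have hflat := fun b hb => h.filter_flat_eq (b := b) (h.ne_of_mem_lettersP hb)
  rw [sigmaHat, sigmaHat, hpos1 A hA, hpos1 B hB, hpos2 A hA, hpos2 B hB]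
  simp [shiftPast_lt_shiftPast, comp1, comp2, projP, hflat A hA, hflat B hB]

theorem lP_eq (h : DeletesAdjacentPair P₁ P₂ t) (l : ℕ) {A : ℕ} (hA : A ∈ lettersP P₂) :
    lP l rep orb P₁ A = lP l rep orb P₂ A := by
  funext j
  rw [lP, lP, lHat, lHat, (h.lettersP_perm.map _).sum_eq, List.map_cons, List.sum_cons,
    sigmaHat_eq_zero_right_of_adjacent rep orb h.pos2_fst, zero_add,
    List.map_congr_left fun B hB => h.sigmaHat_eq rep orb j hA hB]

open Classical in
theorem soEq (h : DeletesAdjacentPair P₁ P₂ t) (l : ℕ) : SoEq l rep orb P₁ P₂ := by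
  refine soEq_of_perm rep orb l fun j v hv => ?_
  have hsub : ∀ b ∈ compLetters P₂ j, b ∈ lettersP P₂ := fun b hb => by
    obtain ⟨s, hs, -, rfl⟩ := _root_.mem_compLetters_iff.mp hb
    exact mem_lettersP_iff.mpr ⟨s, hs, rfl⟩
  have hperm : ((compLetters P₁ j).filter fun A => lP l rep orb P₁ A = v).Perm
      ((compLetters P₂ j).filter fun A => lP l rep orb P₂ A = v) := by
    have hnodup : ∀ P : Phrase α, (compLetters P j).Nodup := fun _ => List.nodup_dedup _
    refine (List.perm_ext_iff_of_nodup ((hnodup P₁).filter _) ((hnodup P₂).filter _)).mpr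
      fun b => ?_
    simp only [List.mem_filter, h.mem_compLetters_iff, decide_eq_true_eq]
    constructor
    · rintro ⟨⟨rfl, -⟩ | hb, hbv⟩
      · exact absurd (lP_eq_zero_of_adjacent rep orb l h.pos2_fst ▸ hbv) (Ne.symm hv)
      · exact ⟨hb, h.lP_eq rep orb l (hsub b hb) ▸ hbv⟩
    · rintro ⟨hb, hbv⟩
      exact ⟨Or.inr hb, (h.lP_eq rep orb l (hsub b hb)).symm ▸ hbv⟩
  refine (hperm.map _).trans (List.Perm.of_eq (List.map_congr_left fun b hb => ?_))
  have hb := h.ne_of_mem_lettersP (hsub b (List.mem_of_mem_filter hb))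
  rw [projP, projP, h.filter_flat_eq hb]

end Invariant

end DeletesAdjacentPair

theorem fst_ne_of_isNanoP {α : Type} [DecidableEq α] {x y : Phrase α} {n : ℕ} {a : α}
    (hnano : isNanoP (x ++ [some (n, a), some (n, a)] ++ y)) :
    ∀ q ∈ (x ++ y).reduceOption, q.1 ≠ n := by
  have hro : (x ++ [some (n, a), some (n, a)] ++ y).reduceOption.Perm
      ((n, a) :: (n, a) :: (x ++ y).reduceOption) := by
    simp only [List.reduceOption_append, List.append_assoc, List.cons_append, List.nil_append,
      List.reduceOption_cons_of_some]
    exact List.perm_middle.trans (List.perm_middle.cons _)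
  intro q hq hqn
  obtain ⟨hcount, hproj⟩ := hnano (n, a) (hro.mem_iff.mpr List.mem_cons_self)
  have hq' : q = (n, a) := Prod.ext hqn
    (hproj q (hro.mem_iff.mpr (List.mem_cons_of_mem _ (List.mem_cons_of_mem _ hq))) hqn)
  rw [hro.count_eq, List.count_cons_self, List.count_cons_self] at hcount
  have := List.count_pos_iff.mpr (hq' ▸ hq)
  omega

theorem deletesAdjacentPair_of_isNanoP {α : Type} [DecidableEq α] {x y : Phrase α} {n : ℕ}
    {a : α} (hnano : isNanoP (x ++ [some (n, a), some (n, a)] ++ y)) :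
    DeletesAdjacentPair (x ++ [some (n, a), some (n, a)] ++ y) (x ++ y)
      (n, a, 1 + (x.filter fun o => o.isNone).length) := by
  refine ⟨flat x 1, flat y (1 + (x.filter fun o => o.isNone).length), ?_, flat_append x y 1,
    fun s hs => fst_ne_of_isNanoP hnano (s.1, s.2.1) ?_⟩
  · rw [List.append_assoc, flat_append]
    simp [flat]
  · rw [← map_flat_eq_reduceOption _ 1, flat_append]
    exact List.mem_map_of_mem hs

theorem stmt14_general {α : Type} [DecidableEq α] [Inhabited α] (l : ℕ)
    (rep : ℕ → α) (orb : α → ℕ)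
    (x y : Phrase α) (n : ℕ) (a : α)
    (hnano : isNanoP (x ++ [some (n, a), some (n, a)] ++ y)) :
    SoEq l rep orb (x ++ [some (n, a), some (n, a)] ++ y) (x ++ y) :=
  (deletesAdjacentPair_of_isNanoP hnano).soEq rep orb l

/-- the invariant `S_o` is invariant under the first homotopy
move: if `P₁ = xAAy` and `P₂ = xy` then `S_o(P₁) = S_o(P₂)`. -/
theorem stmt14 {α : Type} [DecidableEq α] [Inhabited α] (τ : α → α) (l m : ℕ)
    (rep : ℕ → α) (orb : α → ℕ) (hcrs : IsCRS τ l m rep orb)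
    (x y : Phrase α) (n : ℕ) (a : α)
    (hnano : isNanoP (x ++ [some (n, a), some (n, a)] ++ y)) :
    SoEq l rep orb (x ++ [some (n, a), some (n, a)] ++ y) (x ++ y) :=
  stmt14_general l rep orb x y n a hnano
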